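/- Let q ≥ 1 and let λ be a partition. The q-core of the conjugate partition λ' equals the conjugate of the q-core of λ. -/

import Mathlib

/-!
A partition `μ` is encoded by its beta-set `{μᵢ + (ℓ(μ) - 1 - i)}`, which is determined by `μ` up
to the shift `β ↦ {0, …, k - 1} ∪ (β + k)`. Removing a rim hook of length `q` moves one bead down
by `q` on the `q`-abacus, so the `q`-core is read off from `betaCore q β`: in every residue class
modulo `q` the beads are pushed to the bottom. That set is the unique one closed under `x ↦ x - q`
with the same residue counts as `β`.

For `N = ℓ(μ) + ℓ(μ')` the beta-set of `μ'` is the complement of `β(μ)` in `{0, …, N - 1}`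
reflected by `x ↦ N - 1 - x`, since `μᵢ + μ'ⱼ ≠ i + j + 1` for all `i < ℓ(μ)`, `j < ℓ(μ')`.
A reflected complement of a set closed under `x ↦ x - q` is again closed, and its residue counts
only depend on those of the original set, so `betaCore` commutes with the reflected complement.
-/

/-- The beta-set (set of first-column hook lengths) of a partition given as a
weakly decreasing list of parts. -/
def betaSet (l : List ℕ) : List ℕ :=
  l.zipIdx.map (fun p => p.1 + (l.length - 1 - p.2))

/-- Recover a partition (weakly decreasing list of positive parts) from a
list of distinct beta-numbers. -/
def fromBeta (b : List ℕ) : List ℕ :=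
  let s := List.insertionSort (· ≥ ·) b
  (s.zipIdx.map (fun p => p.1 - (s.length - 1 - p.2))).filter (fun x => x ≠ 0)

/-- `MN β γ` is the value of the irreducible character of the symmetric group
indexed by the partition `β` at the conjugacy class of cycle type `γ`,
computed via the Murnaghan–Nakayama rule (phrased in terms of beta-numbers:
removing a rim hook of length `q` replaces a beta-number `x` by `x - q`,
the sign being `(-1)` to the number of beta-numbers strictly between
`x - q` and `x`, i.e. the leg length of the hook). -/
def MN : List ℕ → List ℕ → ℤ
  | β, [] => if β = [] then 1 else 0
  | β, q :: γ =>
      ((betaSet β).map (fun x =>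
        if q ≤ x ∧ x - q ∉ betaSet β then
          (-1) ^ ((betaSet β).filter (fun y => x - q < y ∧ y < x)).length *
            MN (fromBeta ((x - q) :: (betaSet β).erase x)) γ
        else 0)).sum

/-- `l` is a partition of `m`: a weakly decreasing list of positive parts
summing to `m`. -/
def IsPartition (l : List ℕ) (m : ℕ) : Prop :=
  l.Pairwise (· ≥ ·) ∧ (∀ i ∈ l, 0 < i) ∧ l.sum = m

/-- The conjugate (transpose) partition: `(conjugate l)_i = #{j : l_j > i}`. -/
def conjugate (l : List ℕ) : List ℕ :=
  (List.range (l.foldr max 0)).map (fun i => (l.filter (fun p => i < p)).length)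

/-- The `q`-core of a partition: the partition obtained by repeatedly
removing rim hooks of length `q` until none remain.  In terms of the
beta-set `B`, the beta-numbers in each residue class `r` modulo `q` are
pushed down to `r, r + q, …, r + (k-1)q` where `k` is their number. -/
def qCore (q : ℕ) (l : List ℕ) : List ℕ :=
  let B := betaSet l
  fromBeta ((List.range q).flatMap (fun r =>
    (List.range ((B.filter (fun x => x % q = r)).length)).map
      (fun i => q * i + r)))

open Finset

lemma length_betaSet (l : List ℕ) : (betaSet l).length = l.length := by
  simp [betaSet]

@[simp] lemma getElem_betaSet (l : List ℕ) (i : ℕ) (h : i < (betaSet l).length) :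
    (betaSet l)[i] = l[i]'(by simpa [length_betaSet] using h) + (l.length - 1 - i) := by
  simp [betaSet]

lemma mem_betaSet {l : List ℕ} {x : ℕ} :
    x ∈ betaSet l ↔ ∃ i, ∃ h : i < l.length, l[i] + (l.length - 1 - i) = x := by
  simp [List.mem_iff_getElem, length_betaSet]

lemma pairwise_gt_betaSet {a : List ℕ} (ha : a.Pairwise (· ≥ ·)) :
    (betaSet a).Pairwise (· > ·) := by
  rw [List.pairwise_iff_getElem] at ha ⊢
  intro i j hi hj hij
  rw [length_betaSet] at hi hj
  have := ha i j hi hj hij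
  simp only [getElem_betaSet]
  omega

lemma nodup_betaSet {a : List ℕ} (ha : a.Pairwise (· ≥ ·)) : (betaSet a).Nodup :=
  (pairwise_gt_betaSet ha).nodup

lemma fromBeta_perm {b b' : List ℕ} (h : b.Perm b') : fromBeta b = fromBeta b' := by
  have : List.insertionSort (· ≥ ·) b = List.insertionSort (· ≥ ·) b' :=
    List.Perm.eq_of_pairwise' (List.pairwise_insertionSort _ b) (List.pairwise_insertionSort _ b')
      (((List.perm_insertionSort _ b).trans h).trans (List.perm_insertionSort _ b').symm)
  simp only [fromBeta, this]

lemma fromBeta_betaSet {a : List ℕ} (ha : a.Pairwise (· ≥ ·)) :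
    fromBeta (betaSet a) = a.filter (· ≠ 0) := by
  simp only [fromBeta, ((pairwise_gt_betaSet ha).imp le_of_lt).insertionSort_eq]
  congr 1
  apply List.ext_getElem (by simp [length_betaSet])
  intro i _ _
  simp [length_betaSet]

lemma getElem_add_le_of_pairwise_gt {s : List ℕ} (hs : s.Pairwise (· > ·)) {i j : ℕ}
    (hij : i ≤ j) (hj : j < s.length) : s[j] + (j - i) ≤ s[i] := by
  induction j with
  | zero => simp [Nat.le_zero.mp hij]
  | succ j ih =>
    rcases hij.eq_or_lt with rfl | hij
    · simp
    have := List.pairwise_iff_getElem.mp hs j (j + 1) (by omega) hj (by omega)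
    have := ih (by omega) (by omega)
    omega

lemma exists_betaSet_eq {s : List ℕ} (hs : s.Pairwise (· > ·)) :
    ∃ a : List ℕ, a.Pairwise (· ≥ ·) ∧ betaSet a = s := by
  have stair (i : ℕ) (hi : i < s.length) : s.length - 1 - i ≤ s[i] := by
    have := getElem_add_le_of_pairwise_gt hs (show i ≤ s.length - 1 by omega) (by omega)
    omega
  refine ⟨s.mapIdx fun i x => x - (s.length - 1 - i), ?_, ?_⟩
  · rw [List.pairwise_iff_getElem]
    intro i j hi hj hij
    simp only [List.length_mapIdx] at hi hj
    have := getElem_add_le_of_pairwise_gt hs hij.le hj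
    have := stair j hj
    simp only [List.getElem_mapIdx]
    omega
  · apply List.ext_getElem (by simp [length_betaSet])
    intro i hi _
    have := stair i (by simpa [length_betaSet] using hi)
    simp only [getElem_betaSet, List.getElem_mapIdx, List.length_mapIdx]
    omega

lemma exists_eq_filter_append_replicate {a : List ℕ} (ha : a.Pairwise (· ≥ ·)) :
    ∃ k, a = a.filter (· ≠ 0) ++ List.replicate k 0 := by
  induction a with
  | nil => exact ⟨0, rfl⟩
  | cons x t ih =>
    obtain ⟨hx, ht⟩ := List.pairwise_cons.mp ha
    rcases Nat.eq_zero_or_pos x with rfl | hx0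
    · refine ⟨t.length + 1, ?_⟩
      have : ∀ y ∈ t, y = 0 := fun y hy => Nat.le_zero.mp (hx y hy)
      rw [List.filter_eq_nil_iff.mpr (by simpa using this), List.nil_append,
        List.eq_replicate_iff]
      simpa using this
    · obtain ⟨k, hk⟩ := ih ht
      exact ⟨k, by rw [List.filter_cons_of_pos (by simpa using hx0.ne'), List.cons_append, ← hk]⟩


def betaShift (k : ℕ) (S : Finset ℕ) : Finset ℕ := range k ∪ S.image (· + k)

lemma mem_betaShift {k x : ℕ} {S : Finset ℕ} : x ∈ betaShift k S ↔ x < k ∨ k ≤ x ∧ x - k ∈ S := by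
  simp only [betaShift, mem_union, mem_range, mem_image]
  constructor
  · rintro (h | ⟨y, hy, rfl⟩)
    · exact .inl h
    · exact .inr ⟨by omega, by simpa using hy⟩
  · rintro (h | ⟨h, hx⟩)
    · exact .inl h
    · exact .inr ⟨x - k, hx, by omega⟩

lemma card_betaShift (k : ℕ) (S : Finset ℕ) : #(betaShift k S) = k + #S := by
  rw [betaShift, card_union_of_disjoint, card_range,
    card_image_of_injective _ (add_left_injective k)]
  exact disjoint_left.mpr fun x hx hx' => by
    obtain ⟨y, -, rfl⟩ := mem_image.mp hx'
    simp at hx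

lemma betaShift_subset_range_iff {k N : ℕ} {S : Finset ℕ} :
    betaShift k S ⊆ range N ↔ k ≤ N ∧ S ⊆ range (N - k) := by
  simp only [subset_iff, mem_betaShift, mem_range]
  constructor
  · intro h
    refine ⟨?_, fun y hy => ?_⟩
    · rcases Nat.eq_zero_or_pos k with hk | hk
      · omega
      · have := h (x := k - 1) (.inl (by omega))
        omega
    · have := h (x := y + k) (.inr ⟨by omega, by simpa using hy⟩)
      omega
  · rintro ⟨hk, hS⟩ x (hx | ⟨hx, hxS⟩)
    · omega
    · have := hS hxS
      omega

lemma toFinset_betaSet_append_replicate (μ : List ℕ) (k : ℕ) :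
    (betaSet (μ ++ List.replicate k 0)).toFinset = betaShift k (betaSet μ).toFinset := by
  ext x
  simp only [List.mem_toFinset, mem_betaSet, mem_betaShift, List.length_append,
    List.length_replicate]
  constructor
  · rintro ⟨i, hi, rfl⟩
    by_cases hiμ : i < μ.length
    · rw [List.getElem_append_left hiμ]
      exact .inr ⟨by omega, i, hiμ, by omega⟩
    · rw [List.getElem_append_right (by omega), List.getElem_replicate]
      exact .inl (by omega)
  · rintro (hx | ⟨hx, i, hi, hix⟩)
    · refine ⟨μ.length + k - 1 - x, by omega, ?_⟩
      rw [List.getElem_append_right (by omega), List.getElem_replicate]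
      omega
    · refine ⟨i, by omega, ?_⟩
      rw [List.getElem_append_left hi]
      omega

def partitionOfBeta (S : Finset ℕ) : List ℕ := fromBeta (S.sort (· ≥ ·))

lemma fromBeta_eq_partitionOfBeta {b : List ℕ} (hb : b.Nodup) :
    fromBeta b = partitionOfBeta b.toFinset :=
  fromBeta_perm ((sort_perm_toList _ _).trans (List.toFinset_toList hb)).symm

lemma partitionOfBeta_betaShift_betaSet {μ : List ℕ} (hμ : μ.Pairwise (· ≥ ·))
    (hpos : ∀ x ∈ μ, 0 < x) (k : ℕ) : partitionOfBeta (betaShift k (betaSet μ).toFinset) = μ := by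
  have hμk : (μ ++ List.replicate k 0).Pairwise (· ≥ ·) :=
    List.pairwise_append.mpr ⟨hμ, List.pairwise_replicate.mpr (.inr le_rfl),
      fun _ _ _ hy => by simp [List.eq_of_mem_replicate hy]⟩
  rw [← toFinset_betaSet_append_replicate, ← fromBeta_eq_partitionOfBeta (nodup_betaSet hμk),
    fromBeta_betaSet hμk, List.filter_append,
    List.filter_eq_self.mpr (by simpa using fun x hx => (hpos x hx).ne'),
    List.filter_eq_nil_iff.mpr (by simp +contextual),
    List.append_nil]

lemma exists_partitionOfBeta_eq (S : Finset ℕ) : ∃ a : List ℕ, a.Pairwise (· ≥ ·) ∧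
    (betaSet a).toFinset = S ∧ partitionOfBeta S = a.filter (· ≠ 0) := by
  obtain ⟨a, ha, hs⟩ := exists_betaSet_eq (sortedGT_sort S).pairwise
  refine ⟨a, ha, by rw [hs, sort_toFinset], ?_⟩
  rw [partitionOfBeta, ← hs, fromBeta_betaSet ha]

lemma pairwise_partitionOfBeta (S : Finset ℕ) : (partitionOfBeta S).Pairwise (· ≥ ·) := by
  obtain ⟨a, ha, -, h⟩ := exists_partitionOfBeta_eq S
  exact h ▸ ha.filter _

lemma exists_eq_betaShift_partitionOfBeta (S : Finset ℕ) :
    ∃ k, S = betaShift k (betaSet (partitionOfBeta S)).toFinset := by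
  obtain ⟨a, ha, hS, h⟩ := exists_partitionOfBeta_eq S
  obtain ⟨k, hk⟩ := exists_eq_filter_append_replicate ha
  refine ⟨k, ?_⟩
  rw [h, ← toFinset_betaSet_append_replicate, ← hk, hS]

def betaReflect (N : ℕ) (S : Finset ℕ) : Finset ℕ := (range N \ S).image (N - 1 - ·)

lemma mem_betaReflect {N x : ℕ} {S : Finset ℕ} :
    x ∈ betaReflect N S ↔ x < N ∧ N - 1 - x ∉ S := by
  simp only [betaReflect, mem_image, mem_sdiff, mem_range]
  constructor
  · rintro ⟨y, ⟨hy, hyS⟩, rfl⟩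
    exact ⟨by omega, by rwa [show N - 1 - (N - 1 - y) = y by omega]⟩
  · rintro ⟨hx, hxS⟩
    exact ⟨N - 1 - x, ⟨by omega, hxS⟩, by omega⟩

lemma injOn_sub_one_sub_range (N : ℕ) : Set.InjOn (N - 1 - ·) (range N) := by
  intro a ha b hb hab
  simp only [coe_range, Set.mem_Iio] at ha hb
  simp only at hab
  omega

lemma card_betaReflect {N : ℕ} {S : Finset ℕ} (hS : S ⊆ range N) :
    #(betaReflect N S) = N - #S := by
  rw [betaReflect, card_image_of_injOn ((injOn_sub_one_sub_range N).mono (by simp)),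
    card_sdiff_of_subset hS, card_range]

lemma betaReflect_betaShift {k N : ℕ} (hk : k ≤ N) (S : Finset ℕ) :
    betaReflect N (betaShift k S) = betaReflect (N - k) S := by
  ext x
  simp only [mem_betaReflect, mem_betaShift]
  rw [show N - 1 - x - k = N - k - 1 - x by omega]
  by_cases hx : N - k - 1 - x ∈ S <;> simp [hx]
  omega

lemma length_conjugate (μ : List ℕ) : (conjugate μ).length = μ.foldr max 0 := by
  simp [conjugate]

@[simp] lemma getElem_conjugate (μ : List ℕ) (j : ℕ) (h : j < (conjugate μ).length) :
    (conjugate μ)[j] = (μ.filter (j < ·)).length := by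
  simp [conjugate]

lemma le_length_conjugate {μ : List ℕ} {x : ℕ} (hx : x ∈ μ) : x ≤ (conjugate μ).length := by
  rw [length_conjugate]
  exact List.le_max_of_le hx le_rfl

lemma pairwise_conjugate (μ : List ℕ) : (conjugate μ).Pairwise (· ≥ ·) := by
  rw [List.pairwise_iff_getElem]
  intro i j _ _ hij
  simp only [getElem_conjugate, ← List.countP_eq_length_filter]
  exact List.countP_mono_left fun x _ hx => by simp only [decide_eq_true_eq] at hx ⊢; omega

lemma pos_of_mem_conjugate {μ : List ℕ} {x : ℕ} (hx : x ∈ conjugate μ) : 0 < x := by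
  obtain ⟨j, hj, rfl⟩ := List.mem_iff_getElem.mp hx
  obtain ⟨p, hp, hjp⟩ : ∃ p ∈ μ, j < p := by
    by_contra! h
    have := List.max_le_of_forall_le μ j h
    rw [length_conjugate] at hj
    exact absurd hj (not_lt.mpr this)
  rw [getElem_conjugate]
  exact List.length_pos_of_mem (List.mem_filter.mpr ⟨hp, by simpa using hjp⟩)

lemma betaSet_subset_range (μ : List ℕ) :
    (betaSet μ).toFinset ⊆ range (μ.length + (conjugate μ).length) := by
  intro x hx
  obtain ⟨i, hi, rfl⟩ := mem_betaSet.mp (List.mem_toFinset.mp hx)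
  have := le_length_conjugate (List.getElem_mem hi)
  rw [mem_range]
  omega

lemma length_add_length_conjugate_le {μ : List ℕ} (hμ : μ.Pairwise (· ≥ ·)) {M : ℕ}
    (h : (betaSet μ).toFinset ⊆ range M) : μ.length + (conjugate μ).length ≤ M := by
  cases μ with
  | nil => simp [conjugate]
  | cons a t =>
    have h0 := h (List.mem_toFinset.mpr (mem_betaSet.mpr ⟨0, by simp, rfl⟩))
    have ha : (conjugate (a :: t)).length ≤ a := by
      rw [length_conjugate]
      exact List.max_le_of_forall_le _ _ (by simpa using (List.pairwise_cons.mp hμ).1)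
    simp only [List.getElem_cons_zero, List.length_cons, mem_range] at h0
    simp only [List.length_cons]
    omega

lemma lt_getElem_conjugate_iff {μ : List ℕ} (hμ : μ.Pairwise (· ≥ ·)) {i j : ℕ}
    (hi : i < μ.length) (hj : j < (conjugate μ).length) :
    i < (conjugate μ)[j] ↔ j < μ[i] := by
  have anti {k m : ℕ} (hkm : k ≤ m) (hm : m < μ.length) : μ[m] ≤ μ[k] :=
    List.sortedGE_iff_getElem_ge_getElem_of_le.mp hμ.sortedGE hkm
  have hsplit : (μ.filter (j < ·)).length =
      ((μ.take i).filter (j < ·)).length + ((μ.drop i).filter (j < ·)).length := by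
    rw [← List.length_append, ← List.filter_append, List.take_append_drop]
  rw [getElem_conjugate, hsplit]
  constructor
  · intro h
    by_contra! hle
    have hdrop : (μ.drop i).filter (j < ·) = [] := List.filter_eq_nil_iff.mpr fun b hb => by
      obtain ⟨k, hk, rfl⟩ := List.mem_iff_getElem.mp hb
      rw [List.length_drop] at hk
      have := anti (Nat.le_add_right i k) (by omega)
      simp only [List.getElem_drop, decide_eq_true_eq]
      omega
    have := List.length_filter_le (j < ·) (μ.take i)
    simp only [hdrop, List.length_nil, List.length_take] at h this
    omega
  · intro h
    have htake : (μ.take i).filter (j < ·) = μ.take i := List.filter_eq_self.mpr fun a ha => by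
      obtain ⟨k, hk, rfl⟩ := List.mem_iff_getElem.mp ha
      rw [List.length_take] at hk
      have := anti (show k ≤ i by omega) hi
      simp only [List.getElem_take, decide_eq_true_eq]
      omega
    have hdrop : μ[i] ∈ (μ.drop i).filter (j < ·) :=
      List.mem_filter.mpr
        ⟨List.mem_iff_getElem.mpr ⟨0, by simpa using hi, by simp⟩, by simpa using h⟩
    have := List.length_pos_of_mem hdrop
    rw [htake, List.length_take]
    omega

lemma betaShift_betaSet_conjugate {μ : List ℕ} (hμ : μ.Pairwise (· ≥ ·)) {N : ℕ}
    (hN : μ.length + (conjugate μ).length ≤ N) :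
    betaShift (N - μ.length - (conjugate μ).length) (betaSet (conjugate μ)).toFinset =
      betaReflect N (betaSet μ).toFinset := by
  apply eq_of_subset_of_card_le
  · intro x hx
    rw [mem_betaReflect, List.mem_toFinset, mem_betaSet]
    rcases mem_betaShift.mp hx with hx | ⟨hx, hβ⟩
    · refine ⟨by omega, ?_⟩
      rintro ⟨i, hi, hix⟩
      have := le_length_conjugate (List.getElem_mem hi)
      omega
    · obtain ⟨j, hj, hjx⟩ := mem_betaSet.mp (List.mem_toFinset.mp hβ)
      have hμj : (conjugate μ)[j] ≤ μ.length := by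
        rw [getElem_conjugate]
        exact List.length_filter_le _ _
      refine ⟨by omega, ?_⟩
      rintro ⟨i, hi, hix⟩
      have := lt_getElem_conjugate_iff hμ hi hj
      omega
  · rw [card_betaReflect ((betaSet_subset_range μ).trans (range_subset_range.mpr hN)),
      card_betaShift, List.toFinset_card_of_nodup (nodup_betaSet (pairwise_conjugate μ)),
      List.toFinset_card_of_nodup (nodup_betaSet hμ), length_betaSet, length_betaSet]
    omega

lemma conjugate_partitionOfBeta {N : ℕ} {S : Finset ℕ} (hS : S ⊆ range N) :
    conjugate (partitionOfBeta S) = partitionOfBeta (betaReflect N S) := by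
  obtain ⟨k, hk⟩ := exists_eq_betaShift_partitionOfBeta S
  have hμ := pairwise_partitionOfBeta S
  obtain ⟨hkN, hμN⟩ := betaShift_subset_range_iff.mp (hk ▸ hS)
  conv_rhs => rw [hk]
  rw [betaReflect_betaShift hkN, ← betaShift_betaSet_conjugate hμ
    (length_add_length_conjugate_le hμ hμN),
    partitionOfBeta_betaShift_betaSet (pairwise_conjugate _) fun _ => pos_of_mem_conjugate]

lemma mem_image_range_mul_add {q r k x : ℕ} (hq : 0 < q) (hr : r < q) :
    x ∈ (range k).image (q * · + r) ↔ x % q = r ∧ x / q < k := by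
  simp only [mem_image, mem_range]
  constructor
  · rintro ⟨i, hi, rfl⟩
    rw [Nat.mul_add_mod, Nat.mod_eq_of_lt hr, Nat.mul_add_div hq, Nat.div_eq_of_lt hr]
    exact ⟨rfl, by simpa⟩
  · rintro ⟨rfl, hx⟩
    exact ⟨x / q, hx, Nat.div_add_mod x q⟩

lemma card_image_range_mul_add {q : ℕ} (hq : 0 < q) (r k : ℕ) :
    #((range k).image (q * · + r)) = k := by
  rw [card_image_of_injective _ fun i j h => Nat.eq_of_mul_eq_mul_left hq (Nat.add_right_cancel h),
    card_range]

def residueCount (q : ℕ) (S : Finset ℕ) (r : ℕ) : ℕ := #(S.filter (· % q = r))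

lemma card_filter_mod_eq_sum {q : ℕ} (hq : 0 < q) (X : Finset ℕ) (p : ℕ → Prop)
    [DecidablePred p] :
    #(X.filter fun x => p (x % q)) = ∑ r ∈ (range q).filter p, residueCount q X r := by
  rw [card_eq_sum_card_fiberwise (f := (· % q)) fun x hx =>
    mem_filter.mpr ⟨mem_range.mpr (Nat.mod_lt x hq), (mem_filter.mp hx).2⟩]
  refine sum_congr rfl fun r hr => ?_
  rw [residueCount, filter_filter]
  congr 1
  exact filter_congr fun x _ =>
    ⟨And.right, fun h => ⟨by simpa [show x % q = r from h] using (mem_filter.mp hr).2, h⟩⟩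

lemma card_filter_mod_eq_of_residueCount_eq {q : ℕ} (hq : 0 < q) {X Y : Finset ℕ}
    (h : ∀ r < q, residueCount q X r = residueCount q Y r) (p : ℕ → Prop) [DecidablePred p] :
    #(X.filter fun x => p (x % q)) = #(Y.filter fun x => p (x % q)) := by
  rw [card_filter_mod_eq_sum hq, card_filter_mod_eq_sum hq]
  exact sum_congr rfl fun r hr => h r (mem_range.mp (mem_filter.mp hr).1)

def betaCore (q : ℕ) (S : Finset ℕ) : Finset ℕ :=
  (range q).biUnion fun r => (range (residueCount q S r)).image (q * · + r)

lemma mem_betaCore {q : ℕ} (hq : 0 < q) {S : Finset ℕ} {x : ℕ} :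
    x ∈ betaCore q S ↔ x / q < residueCount q S (x % q) := by
  simp only [betaCore, mem_biUnion, mem_range]
  constructor
  · rintro ⟨r, hr, hx⟩
    obtain ⟨rfl, hx⟩ := (mem_image_range_mul_add hq hr).mp hx
    exact hx
  · intro hx
    exact ⟨x % q, Nat.mod_lt x hq, (mem_image_range_mul_add hq (Nat.mod_lt x hq)).mpr ⟨rfl, hx⟩⟩

lemma residueCount_betaCore {q : ℕ} (hq : 0 < q) (S : Finset ℕ) {r : ℕ} (hr : r < q) :
    residueCount q (betaCore q S) r = residueCount q S r := by
  have : (betaCore q S).filter (· % q = r) = (range (residueCount q S r)).image (q * · + r) := by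
    ext x
    rw [mem_filter, mem_betaCore hq, mem_image_range_mul_add hq hr]
    constructor
    · rintro ⟨hx, rfl⟩
      exact ⟨rfl, hx⟩
    · rintro ⟨rfl, hx⟩
      exact ⟨hx, rfl⟩
  rw [residueCount, this, card_image_range_mul_add hq]

def IsCoreBetaSet (q : ℕ) (T : Finset ℕ) : Prop := ∀ x ∈ T, q ≤ x → x - q ∈ T

namespace IsCoreBetaSet

variable {q : ℕ} {T : Finset ℕ}

lemma sub_mul_mem (hT : IsCoreBetaSet q T) {x : ℕ} (hx : x ∈ T) {j : ℕ} (hj : q * j ≤ x) :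
    x - q * j ∈ T := by
  induction j with
  | zero => simpa
  | succ j ih =>
    rw [Nat.mul_succ] at hj ⊢
    rw [← Nat.sub_sub]
    exact hT _ (ih (by omega)) (by omega)

lemma mem_of_mod_eq (hT : IsCoreBetaSet q T) {x y : ℕ} (hy : y ∈ T) (hmod : x % q = y % q)
    (hdiv : x / q ≤ y / q) : x ∈ T := by
  have hx := Nat.div_add_mod x q
  have hy' := Nat.div_add_mod y q
  have hle := Nat.mul_le_mul_left q hdiv
  have := hT.sub_mul_mem hy (j := y / q - x / q) (by rw [Nat.mul_sub]; omega)
  rwa [Nat.mul_sub, show y - (q * (y / q) - q * (x / q)) = x by omega] at this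

lemma mem_iff (hq : 0 < q) (hT : IsCoreBetaSet q T) {x : ℕ} :
    x ∈ T ↔ x / q < residueCount q T (x % q) := by
  have hr := Nat.mod_lt x hq
  constructor
  · intro hxT
    have hsub : (range (x / q + 1)).image (q * · + x % q) ⊆ T.filter (· % q = x % q) := by
      intro y hy
      obtain ⟨hyr, hyq⟩ := (mem_image_range_mul_add hq hr).mp hy
      exact mem_filter.mpr ⟨hT.mem_of_mod_eq hxT hyr (by omega), hyr⟩
    have := card_le_card hsub
    rw [card_image_range_mul_add hq] at this
    exact this
  · intro h
    by_contra hxT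
    have hsub : T.filter (· % q = x % q) ⊆ (range (x / q)).image (q * · + x % q) := by
      intro y hy
      obtain ⟨hyT, hyr⟩ := mem_filter.mp hy
      refine (mem_image_range_mul_add hq hr).mpr ⟨hyr, ?_⟩
      by_contra! hle
      exact hxT (hT.mem_of_mod_eq hyT hyr.symm hle)
    have := card_le_card hsub
    rw [card_image_range_mul_add hq] at this
    exact absurd h (not_lt.mpr this)

lemma eq_betaCore (hq : 0 < q) (hT : IsCoreBetaSet q T) {S : Finset ℕ}
    (h : ∀ r < q, residueCount q T r = residueCount q S r) : T = betaCore q S := by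
  ext x
  rw [hT.mem_iff hq, mem_betaCore hq, h _ (Nat.mod_lt x hq)]

lemma betaReflect (hT : IsCoreBetaSet q T) (N : ℕ) : IsCoreBetaSet q (betaReflect N T) := by
  intro x hx hqx
  rw [mem_betaReflect] at hx ⊢
  refine ⟨by omega, fun h => hx.2 ?_⟩
  have := hT _ h (by omega)
  rwa [show N - 1 - (x - q) - q = N - 1 - x by omega] at this

end IsCoreBetaSet

lemma isCoreBetaSet_range (q N : ℕ) : IsCoreBetaSet q (range N) := by
  intro x hx _
  simp only [mem_range] at hx ⊢
  omega

lemma isCoreBetaSet_betaCore {q : ℕ} (hq : 0 < q) (S : Finset ℕ) :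
    IsCoreBetaSet q (betaCore q S) := by
  intro x hx hqx
  obtain ⟨y, rfl⟩ := Nat.exists_eq_add_of_le' hqx
  rw [mem_betaCore hq, Nat.add_mod_right, Nat.add_div_right _ hq] at hx
  rw [Nat.add_sub_cancel, mem_betaCore hq]
  omega

lemma betaCore_subset_range {q : ℕ} (hq : 0 < q) {N : ℕ} {S : Finset ℕ} (hS : S ⊆ range N) :
    betaCore q S ⊆ range N := by
  intro x hx
  rw [mem_betaCore hq] at hx
  exact ((isCoreBetaSet_range q N).mem_iff hq).mpr
    (hx.trans_le (card_le_card (filter_subset_filter _ hS)))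

-- The right-hand side depends on `a` only through `a % q`.
lemma sub_one_sub_mod_eq {a N : ℕ} (q : ℕ) (ha : a < N) :
    (N - 1 - a) % q = (N - 1 + q - a % q) % q := by
  have := Nat.div_add_mod a q
  rw [show N - 1 + q - a % q = N - 1 - a + q * (a / q + 1) by rw [Nat.mul_succ]; omega,
    Nat.add_mul_mod_self_left]

lemma residueCount_betaReflect {q N : ℕ} {X : Finset ℕ} (hX : X ⊆ range N) (r : ℕ) :
    residueCount q (betaReflect N X) r =
      #((range N).filter fun a => (N - 1 + q - a % q) % q = r) -
        #(X.filter fun a => (N - 1 + q - a % q) % q = r) := by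
  rw [residueCount, betaReflect, filter_image, card_image_of_injOn ((injOn_sub_one_sub_range N).mono
      (coe_subset.mpr ((filter_subset _ _).trans sdiff_subset))),
    ← card_sdiff_of_subset (filter_subset_filter _ hX)]
  congr 1
  ext a
  simp only [mem_filter, mem_sdiff, mem_range]
  constructor
  · rintro ⟨⟨ha, haX⟩, h⟩
    exact ⟨⟨ha, sub_one_sub_mod_eq q ha ▸ h⟩, fun h' => haX h'.1⟩
  · rintro ⟨⟨ha, h⟩, haX⟩
    exact ⟨⟨ha, fun h' => haX ⟨h', h⟩⟩, (sub_one_sub_mod_eq q ha).trans h⟩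

lemma betaCore_betaReflect {q : ℕ} (hq : 0 < q) {N : ℕ} {S : Finset ℕ} (hS : S ⊆ range N) :
    betaCore q (betaReflect N S) = betaReflect N (betaCore q S) := by
  refine (((isCoreBetaSet_betaCore hq S).betaReflect N).eq_betaCore hq fun r _ => ?_).symm
  rw [residueCount_betaReflect (betaCore_subset_range hq hS), residueCount_betaReflect hS,
    card_filter_mod_eq_of_residueCount_eq hq (fun r hr => residueCount_betaCore hq S hr)
      (fun s => (N - 1 + q - s) % q = r)]

lemma nodup_flatMap_range_mul_add {q : ℕ} (hq : 0 < q) (c : ℕ → ℕ) :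
    ((List.range q).flatMap fun r => (List.range (c r)).map (q * · + r)).Nodup := by
  have mod_eq {r x : ℕ} (hr : r ∈ List.range q) (hx : x ∈ (List.range (c r)).map (q * · + r)) :
      x % q = r := by
    obtain ⟨i, -, rfl⟩ := List.mem_map.mp hx
    rw [Nat.mul_add_mod, Nat.mod_eq_of_lt (List.mem_range.mp hr)]
  refine List.nodup_flatMap.mpr ⟨fun r _ => List.nodup_range.map fun i j h =>
    Nat.eq_of_mul_eq_mul_left hq (Nat.add_right_cancel h),
    List.nodup_range.pairwise_of_forall_ne fun r hr s hs hrs x hxr hxs => ?_⟩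
  exact hrs ((mod_eq hr hxr).symm.trans (mod_eq hs hxs))

lemma toFinset_flatMap_range_mul_add (q : ℕ) (c : ℕ → ℕ) :
    ((List.range q).flatMap fun r => (List.range (c r)).map (q * · + r)).toFinset =
      (range q).biUnion fun r => (range (c r)).image (q * · + r) := by
  ext x
  simp

lemma qCore_eq_partitionOfBeta {q : ℕ} (hq : 0 < q) {l : List ℕ} (hl : l.Pairwise (· ≥ ·)) :
    qCore q l = partitionOfBeta (betaCore q (betaSet l).toFinset) := by
  have hcount (r : ℕ) :
      ((betaSet l).filter (· % q = r)).length = residueCount q (betaSet l).toFinset r := by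
    rw [residueCount, ← List.toFinset_card_of_nodup ((nodup_betaSet hl).filter _),
      List.toFinset_filter]
    simp
  unfold qCore
  rw [fromBeta_eq_partitionOfBeta (nodup_flatMap_range_mul_add hq _),
    toFinset_flatMap_range_mul_add, betaCore]
  simp only [hcount]

/-- For `q ≥ 1` and a partition `l`, the `q`-core of the conjugate partition
equals the conjugate of the `q`-core. -/
theorem stmt_17 (q : ℕ) (hq : 1 ≤ q) (n : ℕ) (l : List ℕ)
    (hl : IsPartition l n) :
    qCore q (conjugate l) = conjugate (qCore q l) := by
  have hB := betaSet_subset_range l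
  have hB' : (betaSet (conjugate l)).toFinset =
      betaReflect (l.length + (conjugate l).length) (betaSet l).toFinset := by
    simpa [betaShift] using betaShift_betaSet_conjugate hl.1 le_rfl
  rw [qCore_eq_partitionOfBeta hq (pairwise_conjugate l), qCore_eq_partitionOfBeta hq hl.1, hB',
    betaCore_betaReflect hq hB, conjugate_partitionOfBeta (betaCore_subset_range hq hB)]
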